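/- Let A be a real m×m matrix, s a real eigenvalue of A, and ξ ∈ GE_s(A) with ξ ≠ 0; let ν be the order of ξ, i.e., the smallest positive integer with (A − sI)^ν ξ = 0. For x ∈ ℝ^m define φ_x : ℝ → ℝ by φ_x(τ) = ‖(A − τI)^ν x‖². Then there exist constants ε > 0 and L₀, L₁ > 0 such that: for every x ∈ ℝ^m with ‖x − ξ‖ ≤ ε, the function φ_x attains a global minimum on ℝ at a unique point τ_x, and moreover |τ_x − s| ≤ L₀·‖x − ξ‖ and φ_x(τ_x) ≤ L₁·‖x − ξ‖. -/

import Mathlib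

open Matrix

/-- Matrix exponential of a real square matrix. -/
noncomputable def mexp {m : ℕ} (M : Matrix (Fin m) (Fin m) ℝ) : Matrix (Fin m) (Fin m) ℝ :=
  (NormedSpace.expSeries ℝ (Matrix (Fin m) (Fin m) ℝ)).sum M

/-- Frobenius norm of a real square matrix. -/
noncomputable def fnorm {m : ℕ} (M : Matrix (Fin m) (Fin m) ℝ) : ℝ :=
  Real.sqrt (∑ i, ∑ j, (M i j) ^ 2)

/-- Euclidean norm of a vector in ℝ^m. -/
noncomputable def vnorm {m : ℕ} (x : Fin m → ℝ) : ℝ :=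
  Real.sqrt (∑ i, (x i) ^ 2)

/-- Frobenius inner product ⟨M, N⟩ = trace(Mᵀ N). -/
def finner {m : ℕ} (M N : Matrix (Fin m) (Fin m) ℝ) : ℝ :=
  ∑ i, ∑ j, M i j * N i j

/-- The generalized eigenspace GE_s(A) = {x : (A - s•I)^k x = 0 for some k ≥ 1},
as a submodule of ℝ^m. -/
def GEsub {m : ℕ} (A : Matrix (Fin m) (Fin m) ℝ) (s : ℝ) : Submodule ℝ (Fin m → ℝ) where
  carrier := {x | ∃ k : ℕ, 1 ≤ k ∧ ((A - s • 1) ^ k).mulVec x = 0}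
  zero_mem' := ⟨1, le_refl 1, Matrix.mulVec_zero _⟩
  add_mem' := by
    rintro a b ⟨k, hk, ha⟩ ⟨l, hl, hb⟩
    refine ⟨max k l, le_trans hk (le_max_left _ _), ?_⟩
    have h1 : ((A - s • 1) ^ (max k l)).mulVec a = 0 := by
      have h : (A - s • 1) ^ (max k l) = (A - s • 1) ^ (max k l - k) * (A - s • 1) ^ k := by
        rw [← pow_add]; congr 1; omega
      rw [h, ← Matrix.mulVec_mulVec, ha, Matrix.mulVec_zero]
    have h2 : ((A - s • 1) ^ (max k l)).mulVec b = 0 := by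
      have h : (A - s • 1) ^ (max k l) = (A - s • 1) ^ (max k l - l) * (A - s • 1) ^ l := by
        rw [← pow_add]; congr 1; omega
      rw [h, ← Matrix.mulVec_mulVec, hb, Matrix.mulVec_zero]
    rw [Matrix.mulVec_add, h1, h2, add_zero]
  smul_mem' := by
    rintro c a ⟨k, hk, ha⟩
    exact ⟨k, hk, by rw [Matrix.mulVec_smul, ha, smul_zero]⟩

/-!
Write `T = A - s • 1` and `ψₓ(t) = ‖(T - t)^ν x‖²`, so that `φₓ(s + t) = ψₓ(t)`. The curve
`t ↦ (T - t)^ν ξ` vanishes at `t = 0` with velocity `-ν T^(ν-1) ξ ≠ 0`, hence `ψ_ξ''(0) > 0`,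
and by joint continuity `ψₓ''` is bounded below by a positive constant on a fixed interval
`[-δ, δ]` for all `x` near `ξ`. For `|t| > δ` put `u = 1/t`, so that
`(T - t)^ν x = (-t)^ν (1 - uT)^ν x`; as `X^ν` and `(1 - uX)^ν` are coprime, `(1 - uT)^ν ξ ≠ 0`
for every `u`, and compactness of `|u| ≤ 1/δ` bounds `ψₓ` below away from `[-δ, δ]`, uniformly
for `x` near `ξ`, while `ψₓ(0) = ‖T^ν (x - ξ)‖²` is small. The minimum is therefore attained only
in `[-δ, δ]`, where `ψₓ` is strictly convex, so it is unique; the lower bound on `ψₓ''` turns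
`|ψₓ'(0)| = O(‖x - ξ‖)` into `|tₓ| = O(‖x - ξ‖)`, and `ψₓ(tₓ) ≤ ψₓ(0) = O(‖x - ξ‖²)`.
-/

open Filter Topology Set
open scoped RealInnerProductSpace

section Compact

variable {X Y : Type*} [TopologicalSpace X] [TopologicalSpace Y]

theorem IsCompact.eventually_forall_lt {K : Set Y} (hK : IsCompact K) {g : X → Y → ℝ}
    (hg : Continuous (Function.uncurry g)) {x₀ : X} {c : ℝ} (h : ∀ y ∈ K, c < g x₀ y) :
    ∀ᶠ x in 𝓝 x₀, ∀ y ∈ K, c < g x y :=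
  hK.eventually_forall_of_forall_eventually fun y hy =>
    hg.continuousAt.eventually (lt_mem_nhds (h y hy))

theorem IsCompact.exists_pos_eventually_forall_lt {K : Set Y} (hK : IsCompact K)
    {g : X → Y → ℝ} (hg : Continuous (Function.uncurry g)) {x₀ : X}
    (h : ∀ y ∈ K, 0 < g x₀ y) : ∃ ρ > 0, ∀ᶠ x in 𝓝 x₀, ∀ y ∈ K, ρ < g x y := by
  obtain ⟨ρ, hρ, hle⟩ :=
    hK.exists_forall_le' (hg.comp (Continuous.prodMk_right x₀)).continuousOn h
  exact ⟨ρ / 2, half_pos hρ,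
    hK.eventually_forall_lt hg fun y hy => (half_lt_self hρ).trans_le (hle y hy)⟩

theorem exists_pos_eventually_forall_Icc_lt {g : X → ℝ → ℝ}
    (hg : Continuous (Function.uncurry g)) {x₀ : X} {c : ℝ} (h : c < g x₀ 0) :
    ∃ δ > 0, ∀ᶠ x in 𝓝 x₀, ∀ t ∈ Icc (-δ) δ, c < g x t := by
  obtain ⟨δ, hδ, hball⟩ := Metric.nhds_basis_closedBall.eventually_iff.1
    ((hg.comp (Continuous.prodMk_right x₀)).continuousAt.eventually (lt_mem_nhds h))
  refine ⟨δ, hδ, isCompact_Icc.eventually_forall_lt hg fun t ht => hball ?_⟩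
  rwa [Real.closedBall_eq_Icc, zero_sub, zero_add]

end Compact

theorem exists_unique_isMinOn_of_le_deriv2 {ψ ψ' ψ'' : ℝ → ℝ} {c δ : ℝ} (hc : 0 < c)
    (hψ : ∀ t, HasDerivAt ψ (ψ' t) t) (hψ' : ∀ t, HasDerivAt ψ' (ψ'' t) t)
    (hconv : ∀ t ∈ Icc (-δ) δ, c ≤ ψ'' t) (hout : ∀ t, δ < |t| → ψ 0 < ψ t) :
    ∃ t₀, IsMinOn ψ univ t₀ ∧ (∀ t, IsMinOn ψ univ t → t = t₀) ∧ c * |t₀| ≤ |ψ' 0| := by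
  have hδ : 0 ≤ δ := by
    by_contra! h
    exact lt_irrefl _ (hout 0 (by simpa using h))
  have hmem : ∀ {t}, t ∈ Icc (-δ) δ ↔ |t| ≤ δ := abs_le.symm
  have hgrowth : ∀ a ∈ Icc (-δ) δ, ∀ b ∈ Icc (-δ) δ, a ≤ b → c * (b - a) ≤ ψ' b - ψ' a :=
    (convex_Icc _ _).mul_sub_le_image_sub_of_le_deriv
      (fun t _ => (hψ' t).continuousAt.continuousWithinAt)
      (fun t _ => (hψ' t).differentiableAt.differentiableWithinAt)
      (fun t ht => (hψ' t).deriv ▸ hconv t (interior_subset ht))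
  have hcrit : ∀ t, IsMinOn ψ univ t → t ∈ Icc (-δ) δ ∧ ψ' t = 0 := by
    intro t ht
    refine ⟨hmem.2 (not_lt.1 fun h => ?_), (ht.isLocalMin univ_mem).hasDerivAt_eq_zero (hψ t)⟩
    exact (hout t h).not_ge (ht (mem_univ 0))
  have h0 : (0 : ℝ) ∈ Icc (-δ) δ := hmem.2 (by simpa using hδ)
  obtain ⟨t₀, -, hmin⟩ := isCompact_Icc.exists_isMinOn ⟨0, h0⟩
    (continuous_iff_continuousAt.2 fun t => (hψ t).continuousAt).continuousOn
  have hglobal : IsMinOn ψ univ t₀ := fun t _ => by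
    by_cases ht : t ∈ Icc (-δ) δ
    · exact hmin ht
    · exact (hmin h0).trans (hout t (not_le.1 (mt hmem.2 ht))).le
  obtain ⟨ht₀, hcrit₀⟩ := hcrit t₀ hglobal
  refine ⟨t₀, hglobal, fun t ht => ?_, ?_⟩
  · obtain ⟨htδ, hcritt⟩ := hcrit t ht
    rcases le_total t t₀ with h | h
    · nlinarith [hgrowth t htδ t₀ ht₀ h]
    · nlinarith [hgrowth t₀ ht₀ t htδ h]
  · rcases le_total 0 t₀ with h | h
    · rw [abs_of_nonneg h]
      linarith [hgrowth 0 h0 t₀ ht₀ h, neg_abs_le (ψ' 0)]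
    · rw [abs_of_nonpos h]
      linarith [hgrowth t₀ ht₀ 0 h0 h, le_abs_self (ψ' 0)]

theorem hasDerivAt_sub_smul_one_pow {𝕜 𝔸 : Type*} [NontriviallyNormedField 𝕜] [NormedRing 𝔸]
    [NormedAlgebra 𝕜 𝔸] (a : 𝔸) (n : ℕ) (t : 𝕜) :
    HasDerivAt (fun t : 𝕜 => (a - t • 1) ^ n) (-(n : 𝕜) • (a - t • 1) ^ (n - 1)) t := by
  induction n with
  | zero => simpa using hasDerivAt_const t (1 : 𝔸)
  | succ k ih =>
    have hlin : HasDerivAt (fun t : 𝕜 => a - t • (1 : 𝔸)) (-1) t := by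
      simpa using ((hasDerivAt_id t).smul_const (1 : 𝔸)).const_sub a
    convert ih.mul hlin using 1
    · ext t; simp [pow_succ]
    · rcases k with _ | k
      · simp
      · simp only [pow_succ, add_tsub_cancel_right, smul_mul_assoc, mul_neg, mul_one, Nat.cast_add,
          Nat.cast_one]
        module

section NormedSpace

variable {E : Type*} [NormedAddCommGroup E] [NormedSpace ℝ E]

theorem hasDerivAt_sub_smul_one_pow_apply (T : E →L[ℝ] E) (n : ℕ) (x : E) (t : ℝ) :
    HasDerivAt (fun t => ((T - t • 1) ^ n) x) (-(n : ℝ) • ((T - t • 1) ^ (n - 1)) x) t := by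
  simpa only [_root_.smul_apply, map_zero, add_zero] using
    (hasDerivAt_sub_smul_one_pow T n t).clm_apply (hasDerivAt_const t x)

open Polynomial in
theorem one_sub_smul_pow_apply_ne_zero {T : E →L[ℝ] E} {n : ℕ} {ξ : E} (hT : (T ^ n) ξ = 0)
    (hξ : ξ ≠ 0) (u : ℝ) : ((1 - u • T) ^ n) ξ ≠ 0 := by
  obtain ⟨a, b, hab⟩ :=
    (show IsCoprime (X : ℝ[X]) (1 - C u * X) from ⟨C u, 1, by ring⟩).pow (m := n) (n := n)
  have hp : aeval T (1 - C u * X) = 1 - u • T := by simp [Algebra.smul_def]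
  intro h
  apply hξ
  have := congrArg (fun p => aeval T p ξ) hab
  rw [map_add, map_mul, map_mul, map_pow, map_pow, aeval_X, hp, _root_.add_apply,
    mul_apply_eq_comp, mul_apply_eq_comp, hT, h, map_zero, map_zero, add_zero, map_one,
    one_apply_eq_self] at this
  exact this.symm

theorem norm_sub_smul_one_pow_apply (T : E →L[ℝ] E) (n : ℕ) (x : E) {t : ℝ} (ht : t ≠ 0) :
    ‖((T - t • 1) ^ n) x‖ = |t| ^ n * ‖((1 - t⁻¹ • T) ^ n) x‖ := by
  have : T - t • 1 = (-t) • (1 - t⁻¹ • T) := by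
    rw [smul_sub, smul_smul, neg_mul, mul_inv_cancel₀ ht, neg_smul, neg_smul, one_smul]; abel
  rw [this, _root_.smul_pow, _root_.smul_apply, norm_smul, norm_pow, norm_neg,
    Real.norm_eq_abs]

theorem exists_pos_eventually_lt_norm_sub_smul_one_pow_apply (T : E →L[ℝ] E) {n : ℕ} {ξ : E}
    (hT : (T ^ n) ξ = 0) (hξ : ξ ≠ 0) {δ : ℝ} (hδ : 0 < δ) :
    ∃ ρ > 0, ∀ᶠ x in 𝓝 ξ, ∀ t, δ < |t| → ρ < ‖((T - t • 1) ^ n) x‖ := by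
  obtain ⟨ρ, hρ, hfar⟩ := (isCompact_Icc (a := -δ⁻¹) (b := δ⁻¹)).exists_pos_eventually_forall_lt
    (g := fun x u => ‖((1 - u • T) ^ n) x‖) (by fun_prop)
    fun u _ => norm_pos_iff.2 (one_sub_smul_pow_apply_ne_zero hT hξ u)
  refine ⟨δ ^ n * ρ, by positivity, hfar.mono fun x hx t ht => ?_⟩
  have ht0 : t ≠ 0 := by rintro rfl; rw [abs_zero] at ht; linarith
  have hu : t⁻¹ ∈ Icc (-δ⁻¹) δ⁻¹ := abs_le.1 (by rw [abs_inv]; exact inv_anti₀ hδ ht.le)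
  rw [norm_sub_smul_one_pow_apply T n x ht0]
  exact mul_lt_mul' (pow_le_pow_left₀ hδ.le ht.le n) (hx _ hu) hρ.le (by positivity)

end NormedSpace

section InnerProductSpace

variable {E : Type*} [NormedAddCommGroup E] [InnerProductSpace ℝ E]

theorem eventually_exists_unique_isMinOn_norm_sq {X : Type*} [TopologicalSpace X]
    {f f₁ f₂ : X → ℝ → E} (hf : ∀ x t, HasDerivAt (f x) (f₁ x t) t)
    (hf₁ : ∀ x t, HasDerivAt (f₁ x) (f₂ x t) t) (hcont : Continuous (Function.uncurry f))
    (hcont₁ : Continuous (Function.uncurry f₁)) (hcont₂ : Continuous (Function.uncurry f₂))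
    {x₀ : X} (h₀ : f x₀ 0 = 0) (h₁ : f₁ x₀ 0 ≠ 0)
    (hfar : ∀ δ > 0, ∃ ρ > 0, ∀ᶠ x in 𝓝 x₀, ∀ t, δ < |t| → ρ < ‖f x t‖) :
    ∀ᶠ x in 𝓝 x₀, ∃ t₀, IsMinOn (fun t => ‖f x t‖ ^ 2) univ t₀ ∧
      (∀ t, IsMinOn (fun t => ‖f x t‖ ^ 2) univ t → t = t₀) ∧
      ‖f₁ x₀ 0‖ ^ 2 * |t₀| ≤ 2 * (‖f₁ x₀ 0‖ + 1) * ‖f x 0‖ := by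
  have hc : 0 < ‖f₁ x₀ 0‖ ^ 2 := by positivity
  obtain ⟨δ, hδ, hconv⟩ := exists_pos_eventually_forall_Icc_lt
    (g := fun x t => 2 * (⟪f x t, f₂ x t⟫ + ⟪f₁ x t, f₁ x t⟫)) (by fun_prop) (x₀ := x₀)
    (c := ‖f₁ x₀ 0‖ ^ 2)
    (by rw [h₀, inner_zero_left, zero_add, real_inner_self_eq_norm_sq]; linarith)
  obtain ⟨ρ, hρ, hfar⟩ := hfar δ hδ
  have hcenter : ∀ᶠ x in 𝓝 x₀, ‖f x 0‖ < ρ :=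
    (hcont.comp (Continuous.prodMk_left 0)).norm.continuousAt.eventually
      (gt_mem_nhds (show ‖f x₀ 0‖ < ρ by rwa [h₀, norm_zero]))
  have hslope : ∀ᶠ x in 𝓝 x₀, ‖f₁ x 0‖ < ‖f₁ x₀ 0‖ + 1 :=
    (hcont₁.comp (Continuous.prodMk_left 0)).norm.continuousAt.eventually
      (gt_mem_nhds (lt_add_one _))
  filter_upwards [hconv, hfar, hcenter, hslope] with x hconv hfar hcenter hslope
  obtain ⟨t₀, hmin, huniq, hbound⟩ := exists_unique_isMinOn_of_le_deriv2 hc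
    (fun t => (hf x t).norm_sq) (fun t => ((hf x t).inner ℝ (hf₁ x t)).const_mul 2)
    (fun t ht => (hconv t ht).le) fun t ht => by gcongr; exact hcenter.trans (hfar t ht)
  refine ⟨t₀, hmin, huniq, ?_⟩
  calc ‖f₁ x₀ 0‖ ^ 2 * |t₀| ≤ |2 * ⟪f x 0, f₁ x 0⟫| := hbound
    _ ≤ 2 * (‖f x 0‖ * ‖f₁ x 0‖) := by
        rw [abs_mul, abs_two]; gcongr; exact abs_real_inner_le_norm _ _
    _ ≤ 2 * (‖f x 0‖ * (‖f₁ x₀ 0‖ + 1)) := by gcongr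
    _ = 2 * (‖f₁ x₀ 0‖ + 1) * ‖f x 0‖ := by ring

noncomputable def normSqPowSub (T : E →L[ℝ] E) (n : ℕ) (x : E) (t : ℝ) : ℝ :=
  ‖((T - t • 1) ^ n) x‖ ^ 2

theorem normSqPowSub_sub_smul_one (A : E →L[ℝ] E) (s : ℝ) (n : ℕ) (x : E) (t : ℝ) :
    normSqPowSub (A - s • 1) n x t = normSqPowSub A n x (s + t) := by
  rw [normSqPowSub, normSqPowSub, add_smul, sub_sub]

theorem eventually_exists_unique_isMinOn_normSqPowSub (T : E →L[ℝ] E) {n : ℕ} {ξ : E}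
    (hξ : (T ^ n) ξ = 0) (hξ' : (T ^ (n - 1)) ξ ≠ 0) :
    ∃ L, ∀ᶠ x in 𝓝 ξ, ∃ t₀, IsMinOn (normSqPowSub T n x) univ t₀ ∧
      (∀ t, IsMinOn (normSqPowSub T n x) univ t → t = t₀) ∧
      |t₀| ≤ L * ‖x - ξ‖ ∧ normSqPowSub T n x t₀ ≤ (‖T ^ n‖ * ‖x - ξ‖) ^ 2 := by
  have hn : n ≠ 0 := by rintro rfl; exact hξ' hξ
  have hξ0 : ξ ≠ 0 := by rintro rfl; exact hξ' (map_zero _)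
  set v := -(n : ℝ) • (T ^ (n - 1)) ξ
  have hv : v ≠ 0 := smul_ne_zero (neg_ne_zero.2 (Nat.cast_ne_zero.2 hn)) hξ'
  have hlocal := eventually_exists_unique_isMinOn_norm_sq
    (f := fun x t => ((T - t • 1) ^ n) x)
    (f₁ := fun x t => -(n : ℝ) • ((T - t • 1) ^ (n - 1)) x)
    (f₂ := fun x t => -(n : ℝ) • (-((n - 1 : ℕ) : ℝ) • ((T - t • 1) ^ (n - 1 - 1)) x))
    (hasDerivAt_sub_smul_one_pow_apply T n)
    (fun x t => (hasDerivAt_sub_smul_one_pow_apply T (n - 1) x t).const_smul _)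
    (by fun_prop) (by fun_prop) (by fun_prop) (by simpa using hξ)
    (by simpa only [zero_smul, sub_zero] using hv)
    fun δ hδ => exists_pos_eventually_lt_norm_sub_smul_one_pow_apply T hξ hξ0 hδ
  simp only [zero_smul, sub_zero] at hlocal
  refine ⟨2 * (‖v‖ + 1) * ‖T ^ n‖ / ‖v‖ ^ 2, ?_⟩
  filter_upwards [hlocal] with x ⟨t₀, hmin, huniq, hbound⟩
  have hTe : ‖(T ^ n) x‖ ≤ ‖T ^ n‖ * ‖x - ξ‖ := by
    rw [← sub_zero ((T ^ n) x), ← hξ, ← map_sub]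
    exact (T ^ n).le_opNorm _
  refine ⟨t₀, hmin, huniq, ?_, ?_⟩
  · rw [div_mul_eq_mul_div, le_div_iff₀ (by positivity), mul_comm, mul_assoc _ ‖T ^ n‖]
    exact hbound.trans (by gcongr)
  · calc normSqPowSub T n x t₀ ≤ normSqPowSub T n x 0 := hmin (mem_univ 0)
      _ = ‖(T ^ n) x‖ ^ 2 := by rw [normSqPowSub, zero_smul, sub_zero]
      _ ≤ (‖T ^ n‖ * ‖x - ξ‖) ^ 2 := by gcongr

theorem exists_unique_isMinOn_normSqPowSub (A : E →L[ℝ] E) (s : ℝ) {n : ℕ} {ξ : E}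
    (hξ : ((A - s • 1) ^ n) ξ = 0) (hξ' : ((A - s • 1) ^ (n - 1)) ξ ≠ 0) :
    ∃ ε > 0, ∃ L₀ > 0, ∃ L₁ > 0, ∀ x, ‖x - ξ‖ ≤ ε → ∃ τ₀,
      IsMinOn (normSqPowSub A n x) univ τ₀ ∧
      (∀ τ, IsMinOn (normSqPowSub A n x) univ τ → τ = τ₀) ∧
      |τ₀ - s| ≤ L₀ * ‖x - ξ‖ ∧ normSqPowSub A n x τ₀ ≤ L₁ * ‖x - ξ‖ := by
  obtain ⟨L, hL⟩ := eventually_exists_unique_isMinOn_normSqPowSub (A - s • 1) hξ hξ'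
  obtain ⟨ε, hε, hball⟩ := Metric.nhds_basis_closedBall.eventually_iff.1 hL
  set K := ‖(A - s • 1) ^ n‖
  refine ⟨min ε 1, by positivity, max L 1, by positivity, K ^ 2 + 1, by positivity,
    fun x hx => ?_⟩
  have hx1 : ‖x - ξ‖ ≤ 1 := hx.trans (min_le_right _ _)
  obtain ⟨t₀, hmin, huniq, hbound, hval⟩ :=
    hball (mem_closedBall_iff_norm.2 (hx.trans (min_le_left _ _)))
  have hshift : ∀ τ, IsMinOn (normSqPowSub A n x) univ τ ↔
      IsMinOn (normSqPowSub (A - s • 1) n x) univ (τ - s) := by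
    intro τ
    simp only [isMinOn_univ_iff, normSqPowSub_sub_smul_one, add_sub_cancel]
    exact ⟨fun h t => h _, fun h τ' => by simpa using h (τ' - s)⟩
  refine ⟨s + t₀, (hshift _).2 (by rwa [add_sub_cancel_left]), fun τ hτ => ?_, ?_, ?_⟩
  · rw [← huniq _ ((hshift τ).1 hτ), add_sub_cancel]
  · rw [add_sub_cancel_left]
    exact hbound.trans (by gcongr; exact le_max_left _ _)
  · rw [← normSqPowSub_sub_smul_one]
    calc _ ≤ (K * ‖x - ξ‖) ^ 2 := hval
      _ ≤ (K ^ 2 + 1) * ‖x - ξ‖ := by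
        nlinarith [norm_nonneg (x - ξ),
          mul_nonneg (mul_nonneg (sq_nonneg K) (norm_nonneg (x - ξ))) (sub_nonneg.2 hx1)]

end InnerProductSpace

theorem vnorm_eq_norm_toLp {m : ℕ} (v : Fin m → ℝ) :
    vnorm v = ‖(WithLp.toLp 2 v : EuclideanSpace ℝ (Fin m))‖ := by
  simp [vnorm, EuclideanSpace.norm_eq]

theorem toEuclideanCLM_sub_smul_one_pow_toLp {m : ℕ} (A : Matrix (Fin m) (Fin m) ℝ) (τ : ℝ)
    (n : ℕ) (x : Fin m → ℝ) :
    ((toEuclideanCLM (𝕜 := ℝ) A - τ • 1) ^ n) (WithLp.toLp 2 x) =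
      WithLp.toLp 2 (((A - τ • 1) ^ n) *ᵥ x) := by
  rw [← toEuclideanCLM_toLp, map_pow, map_sub, map_smul, map_one]

theorem stmt18_general {m : ℕ} (A : Matrix (Fin m) (Fin m) ℝ) (s : ℝ)
    (ξ : Fin m → ℝ) (hξ0 : ξ ≠ 0)
    (ν : ℕ) (hann : ((A - s • 1) ^ ν).mulVec ξ = 0)
    (hmin : ∀ k : ℕ, 0 < k → ((A - s • 1) ^ k).mulVec ξ = 0 → ν ≤ k) :
    ∃ ε : ℝ, 0 < ε ∧ ∃ L₀ : ℝ, 0 < L₀ ∧ ∃ L₁ : ℝ, 0 < L₁ ∧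
      ∀ x : Fin m → ℝ, vnorm (x - ξ) ≤ ε →
        ∃ τx : ℝ,
          (∀ τ : ℝ, vnorm (((A - τx • 1) ^ ν).mulVec x) ^ 2
            ≤ vnorm (((A - τ • 1) ^ ν).mulVec x) ^ 2) ∧
          (∀ τ' : ℝ, (∀ τ : ℝ, vnorm (((A - τ' • 1) ^ ν).mulVec x) ^ 2
            ≤ vnorm (((A - τ • 1) ^ ν).mulVec x) ^ 2) → τ' = τx) ∧
          |τx - s| ≤ L₀ * vnorm (x - ξ) ∧
          vnorm (((A - τx • 1) ^ ν).mulVec x) ^ 2 ≤ L₁ * vnorm (x - ξ) := by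
  have hprev : ((A - s • 1) ^ (ν - 1)).mulVec ξ ≠ 0 := by
    rcases Nat.eq_zero_or_pos (ν - 1) with h | h
    · rwa [h, pow_zero, one_mulVec]
    · exact fun h' => absurd (hmin _ h h') (by omega)
  obtain ⟨ε, hε, L₀, hL₀, L₁, hL₁, h⟩ :=
    exists_unique_isMinOn_normSqPowSub (toEuclideanCLM (𝕜 := ℝ) A) s (ξ := WithLp.toLp 2 ξ)
      (by rw [toEuclideanCLM_sub_smul_one_pow_toLp, hann]; rfl)
      (by rwa [toEuclideanCLM_sub_smul_one_pow_toLp, ne_eq, WithLp.toLp_eq_zero])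
  refine ⟨ε, hε, L₀, hL₀, L₁, hL₁, fun x hx => ?_⟩
  simp only [vnorm_eq_norm_toLp, ← toEuclideanCLM_sub_smul_one_pow_toLp, WithLp.toLp_sub]
    at hx ⊢
  simpa only [normSqPowSub, isMinOn_univ_iff] using h _ hx

/-- For a real eigenvalue s of A and nonzero ξ ∈ GE_s(A) of order ν, with
φ_x(τ) = ‖(A − τI)^ν x‖², there exist ε, L₀, L₁ > 0 such that for every x with ‖x − ξ‖ ≤ ε
the function φ_x attains its global minimum at a unique point τ_x, with
|τ_x − s| ≤ L₀‖x − ξ‖ and φ_x(τ_x) ≤ L₁‖x − ξ‖. -/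
theorem stmt18 {m : ℕ} (A : Matrix (Fin m) (Fin m) ℝ) (s : ℝ)
    (hs : s ∈ spectrum ℝ A)
    (ξ : Fin m → ℝ) (hmem : ξ ∈ GEsub A s) (hξ0 : ξ ≠ 0)
    (ν : ℕ) (hν : 0 < ν) (hann : ((A - s • 1) ^ ν).mulVec ξ = 0)
    (hmin : ∀ k : ℕ, 0 < k → ((A - s • 1) ^ k).mulVec ξ = 0 → ν ≤ k) :
    ∃ ε : ℝ, 0 < ε ∧ ∃ L₀ : ℝ, 0 < L₀ ∧ ∃ L₁ : ℝ, 0 < L₁ ∧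
      ∀ x : Fin m → ℝ, vnorm (x - ξ) ≤ ε →
        ∃ τx : ℝ,
          (∀ τ : ℝ, vnorm (((A - τx • 1) ^ ν).mulVec x) ^ 2
            ≤ vnorm (((A - τ • 1) ^ ν).mulVec x) ^ 2) ∧
          (∀ τ' : ℝ, (∀ τ : ℝ, vnorm (((A - τ' • 1) ^ ν).mulVec x) ^ 2
            ≤ vnorm (((A - τ • 1) ^ ν).mulVec x) ^ 2) → τ' = τx) ∧
          |τx - s| ≤ L₀ * vnorm (x - ξ) ∧
          vnorm (((A - τx • 1) ^ ν).mulVec x) ^ 2 ≤ L₁ * vnorm (x - ξ) :=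
  stmt18_general A s ξ hξ0 ν hann hmin
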